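/- In the down-up algebra A(α,β,0) with r₁ ≠ 0, for all k ≥ 0 one has d^k·u = (φ_{k-1}/r₁)·w₁·d^{k-1} + r₂^k·u·d^k. -/

import Mathlib

noncomputable section

open FreeAlgebra

/-- The defining relations of the down-up algebra `A(α,β,γ)`:
generator `0` is `u`, generator `1` is `d`. -/
inductive DownUpRel (K : Type) [Field K] (α β γ : K) :
    FreeAlgebra K (Fin 2) → FreeAlgebra K (Fin 2) → Prop
  | rel1 : DownUpRel K α β γ
      (ι K 1 * ι K 1 * ι K 0)
      (α • (ι K 1 * ι K 0 * ι K 1) + β • (ι K 0 * ι K 1 * ι K 1) + γ • ι K 1)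
  | rel2 : DownUpRel K α β γ
      (ι K 1 * ι K 0 * ι K 0)
      (α • (ι K 0 * ι K 1 * ι K 0) + β • (ι K 0 * ι K 0 * ι K 1) + γ • ι K 0)

/-- The down-up algebra `A(α,β,γ)` of Benkart–Roby. -/
abbrev DownUp (K : Type) [Field K] (α β γ : K) : Type :=
  RingQuot (DownUpRel K α β γ)

/-- The generator `u` of the down-up algebra. -/
def DownUp.u (K : Type) [Field K] (α β γ : K) : DownUp K α β γ :=
  RingQuot.mkAlgHom K _ (ι K 0)

/-- The generator `d` of the down-up algebra. -/
def DownUp.d (K : Type) [Field K] (α β γ : K) : DownUp K α β γ :=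
  RingQuot.mkAlgHom K _ (ι K 1)

/-- `φ_p = ∑_{i=0}^p r₁^i r₂^(p-i)`. -/
def phi (K : Type) [Field K] (r₁ r₂ : K) (p : ℕ) : K :=
  ∑ i ∈ Finset.range (p + 1), r₁ ^ i * r₂ ^ (p - i)

/-- `φ_{k-1}`, with the convention `φ_{-1} = 0` (for `k = 0`). -/
def phiPred (K : Type) [Field K] (r₁ r₂ : K) (k : ℕ) : K :=
  if k = 0 then 0 else phi K r₁ r₂ (k - 1)

/-!
Put `w = w₁ / r₁`. With `α = r₁ + r₂` and `β = -r₁ r₂`, the relation `d²u = α dud + β ud²` says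
that `d w = r₁ w d`, and the definition of `w₁` rewrites as `d u = w + r₂ u d`. Moving `u` to the
left past one `d` at a time, each step either turns `u` into `w` or multiplies by `r₂`, and every
`w` picks up a factor `r₁` when `d` passes it; the coefficients obey `φ_k = r₂^k + r₁ φ_{k-1}`.
-/

lemma phi_succ (K : Type) [Field K] (r₁ r₂ : K) (p : ℕ) :
    phi K r₁ r₂ (p + 1) = r₂ ^ (p + 1) + r₁ * phi K r₁ r₂ p := by
  rw [phi, Finset.sum_range_succ', phi, Finset.mul_sum]
  simp only [Nat.succ_sub_succ, pow_succ', pow_zero, one_mul, Nat.sub_zero, mul_assoc]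
  rw [add_comm]

lemma phiPred_succ (K : Type) [Field K] (r₁ r₂ : K) (k : ℕ) :
    phiPred K r₁ r₂ (k + 1) = phi K r₁ r₂ k := by
  simp [phiPred]

theorem pow_succ_mul_eq_phi_smul_add {K : Type} {A : Type*} [Field K] [Ring A] [Algebra K A]
    {x y z : A} {a b : K} (hxz : x * z = a • (z * x)) (hxy : x * y = z + b • (y * x)) (k : ℕ) :
    x ^ (k + 1) * y = phi K a b k • (z * x ^ k) + b ^ (k + 1) • (y * x ^ (k + 1)) := by
  induction k with
  | zero => simpa [phi] using hxy
  | succ k ih =>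
    have hz : x * (z * x ^ k) = a • (z * x ^ (k + 1)) := by
      rw [← mul_assoc, hxz, smul_mul_assoc, mul_assoc, ← pow_succ']
    have hy : x * (y * x ^ (k + 1)) = z * x ^ (k + 1) + b • (y * x ^ (k + 2)) := by
      rw [← mul_assoc, hxy, add_mul, smul_mul_assoc, mul_assoc, ← pow_succ']
    calc x ^ (k + 2) * y = x * (x ^ (k + 1) * y) := by rw [pow_succ', mul_assoc]
      _ = phi K a b k • (x * (z * x ^ k)) + b ^ (k + 1) • (x * (y * x ^ (k + 1))) := by
        rw [ih, mul_add, mul_smul_comm, mul_smul_comm]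
      _ = _ := by
        rw [hz, hy, phi_succ]
        match_scalars <;> ring

namespace DownUp

variable {K : Type} [Field K] {α β γ : K}

theorem d_mul_d_mul_u :
    d K α β γ * (d K α β γ * u K α β γ) =
      α • (d K α β γ * (u K α β γ * d K α β γ)) + β • (u K α β γ * (d K α β γ * d K α β γ))
        + γ • d K α β γ := by
  simpa [u, d, mul_assoc] using RingQuot.mkAlgHom_rel K (DownUpRel.rel1 (α := α) (β := β) (γ := γ))

variable {r₁ r₂ : K}

theorem d_mul_w₁ (hsum : α = r₁ + r₂) (hprod : β = -(r₁ * r₂)) :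
    d K α β 0 * (β • (u K α β 0 * d K α β 0) + r₁ • (d K α β 0 * u K α β 0)) =
      r₁ • ((β • (u K α β 0 * d K α β 0) + r₁ • (d K α β 0 * u K α β 0)) * d K α β 0) := by
  simp only [mul_add, add_mul, smul_mul_assoc, mul_smul_comm, d_mul_d_mul_u, smul_add, smul_smul,
    mul_assoc, zero_smul, add_zero]
  subst hsum hprod
  match_scalars <;> ring

theorem d_mul_u_eq (hr₁ : r₁ ≠ 0) (hprod : β = -(r₁ * r₂)) :
    d K α β 0 * u K α β 0 =
      (1 / r₁) • (β • (u K α β 0 * d K α β 0) + r₁ • (d K α β 0 * u K α β 0))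
        + r₂ • (u K α β 0 * d K α β 0) := by
  subst hprod
  match_scalars
  · field_simp
  · field_simp; ring

end DownUp

theorem downUp_d_pow_mul_u_general (K : Type) [Field K] (α β r₁ r₂ : K)
    (hr₁ : r₁ ≠ 0) (hsum : α = r₁ + r₂) (hprod : β = -(r₁ * r₂)) :
    let u := DownUp.u K α β 0
    let d := DownUp.d K α β 0
    let w₁ := β • (u * d) + r₁ • (d * u)
    ∀ k : ℕ,
      d ^ k * u =
        (phiPred K r₁ r₂ k / r₁) • (w₁ * d ^ (k - 1)) + r₂ ^ k • (u * d ^ k) := by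
  intro u d w₁ k
  cases k with
  | zero => simp [phiPred]
  | succ k =>
    have hdw : d * ((1 / r₁) • w₁) = r₁ • ((1 / r₁) • w₁ * d) := by
      rw [mul_smul_comm, smul_mul_assoc, DownUp.d_mul_w₁ hsum hprod, smul_comm]
    rw [pow_succ_mul_eq_phi_smul_add hdw (DownUp.d_mul_u_eq hr₁ hprod) k, phiPred_succ,
      Nat.add_sub_cancel, smul_mul_assoc, smul_smul, mul_one_div]

/-- In `A(α,β,0)` with `r₁ ≠ 0`:
`d^k·u = (φ_{k-1}/r₁)·w₁·d^{k-1} + r₂^k·u·d^k` for all `k ≥ 0`. -/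
theorem downUp_d_pow_mul_u (K : Type) [Field K] [CharZero K] (α β r₁ r₂ : K)
    (hr₁ : r₁ ≠ 0) (hsum : α = r₁ + r₂) (hprod : β = -(r₁ * r₂)) :
    let u := DownUp.u K α β 0
    let d := DownUp.d K α β 0
    let w₁ := β • (u * d) + r₁ • (d * u)
    ∀ k : ℕ,
      d ^ k * u =
        (phiPred K r₁ r₂ k / r₁) • (w₁ * d ^ (k - 1)) + r₂ ^ k • (u * d ^ k) :=
  downUp_d_pow_mul_u_general K α β r₁ r₂ hr₁ hsum hprod
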